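/- Let C be a symmetric monoidal category and let L : C → C be a localization functor (i.e., L factors as a left adjoint F : C → D followed by a fully faithful right adjoint G : D → C). Then the following are equivalent: (i) L is smashing, i.e., L is naturally isomorphic to A ⊗ - for some commutative algebra object A in C; (ii) L carries a symmetric monoidal structure making the natural map id → L monoidal, and the essential image of L is an ideal of C (closed under tensoring with arbitrary objects of C). -/

import Mathlib

/-!
If `L = F ⋙ G` is isomorphic to `A ⊗ -`, then `L` inverts exactly the morphisms that `A ⊗ -`
inverts, and in a braided category these are stable under tensor products. Hence `L` inverts
`η X ⊗ η Y`, and since `L (X ⊗ Y)` is local, `η (X ⊗ Y)` extends uniquely along it; this extension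
is the multiplication of a lax monoidal structure, and uniqueness of extensions gives all its
coherence axioms. The essential image of `L` is that of `A ⊗ -`, which is clearly an ideal.

Conversely, a lax symmetric monoidal structure on `L` makes `L 𝟙` a commutative monoid, and
`L 𝟙 ⊗ X ⟶ L 𝟙 ⊗ L X ⟶ L (𝟙 ⊗ X) ≅ L X` is an isomorphism whose inverse is `L` applied to
`X ≅ 𝟙 ⊗ X ⟶ L 𝟙 ⊗ X`: for this one needs `L 𝟙 ⊗ X` to be local, which is the ideal condition.
-/

open CategoryTheory MonoidalCategory

/-- A lax symmetric monoidal structure on an endofunctor `L` of a symmetric monoidal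
category, spelled out in components. -/
structure LaxSymmetricMonoidalStructure {C : Type*} [Category C] [MonoidalCategory C]
    [SymmetricCategory C] (L : C ⥤ C) where
  ε : 𝟙_ C ⟶ L.obj (𝟙_ C)
  μ : ∀ X Y : C, L.obj X ⊗ L.obj Y ⟶ L.obj (X ⊗ Y)
  μ_natural : ∀ {X Y X' Y' : C} (f : X ⟶ X') (g : Y ⟶ Y'),
    (L.map f ⊗ₘ L.map g) ≫ μ X' Y' = μ X Y ≫ L.map (f ⊗ₘ g)
  associativity : ∀ X Y Z : C,
    (μ X Y ▷ L.obj Z) ≫ μ (X ⊗ Y) Z ≫ L.map (α_ X Y Z).hom =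
      (α_ (L.obj X) (L.obj Y) (L.obj Z)).hom ≫ (L.obj X ◁ μ Y Z) ≫ μ X (Y ⊗ Z)
  left_unitality : ∀ X : C,
    (λ_ (L.obj X)).hom = (ε ▷ L.obj X) ≫ μ (𝟙_ C) X ≫ L.map (λ_ X).hom
  right_unitality : ∀ X : C,
    (ρ_ (L.obj X)).hom = (L.obj X ◁ ε) ≫ μ X (𝟙_ C) ≫ L.map (ρ_ X).hom
  braided : ∀ X Y : C,
    (β_ (L.obj X) (L.obj Y)).hom ≫ μ Y X = μ X Y ≫ L.map (β_ X Y).hom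

namespace CategoryTheory.Adjunction

variable {C D : Type*} [Category C] [Category D] {F : C ⥤ D} {G : D ⥤ C}

lemma hom_ext_of_isIso_map (adj : F ⊣ G) {a b W : C} (u : a ⟶ b) [IsIso (F.map u)]
    [IsIso (adj.unit.app W)] {ψ ψ' : b ⟶ W} (h : u ≫ ψ = u ≫ ψ') : ψ = ψ' := by
  rw [← cancel_mono (adj.unit.app W)]
  apply (adj.homEquiv _ _).symm.injective
  rw [← cancel_epi (F.map u), ← homEquiv_naturality_left_symm, reassoc_of% h,
    homEquiv_naturality_left_symm]

variable (adj : F ⊣ G)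

noncomputable def extendAlong {a b : C} (u : a ⟶ b) [IsIso (F.map u)] {d : D}
    (φ : a ⟶ G.obj d) : b ⟶ G.obj d :=
  adj.homEquiv _ _ (inv (F.map u) ≫ (adj.homEquiv _ _).symm φ)

@[simp]
lemma comp_extendAlong {a b : C} (u : a ⟶ b) [IsIso (F.map u)] {d : D} (φ : a ⟶ G.obj d) :
    u ≫ adj.extendAlong u φ = φ := by
  simp [extendAlong, ← homEquiv_naturality_left]

variable [G.Full]

lemma map_unit_app_eq_unit_app_obj (X : C) :
    (F ⋙ G).map (adj.unit.app X) = adj.unit.app ((F ⋙ G).obj X) := by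
  rw [← cancel_mono (G.map (adj.counit.app (F.obj X)))]
  simp [← G.map_comp]

variable [G.Faithful]

-- Instance search does not unfold `(F ⋙ G).obj X` to `G.obj (F.obj X)`.
instance isIso_unit_app_comp_obj (X : C) : IsIso (adj.unit.app ((F ⋙ G).obj X)) :=
  inferInstanceAs (IsIso (adj.unit.app (G.obj _)))

lemma isIso_of_comp_eq_unit_app {P X : C} [IsIso (adj.unit.app P)] (f : P ⟶ (F ⋙ G).obj X)
    (k : X ⟶ P) (hkf : k ≫ f = adj.unit.app X) (hfk : f ≫ (F ⋙ G).map k = adj.unit.app P) :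
    IsIso f := by
  refine ⟨(F ⋙ G).map k ≫ inv (adj.unit.app P), by simp [reassoc_of% hfk], ?_⟩
  have hf : inv (adj.unit.app P) ≫ f = (F ⋙ G).map f ≫ inv (adj.unit.app ((F ⋙ G).obj X)) := by
    simp [IsIso.inv_comp_eq]
  rw [Category.assoc, hf, ← Functor.map_comp_assoc, hkf, map_unit_app_eq_unit_app_obj,
    IsIso.hom_inv_id]

end CategoryTheory.Adjunction

namespace CategoryTheory.MonoidalCategory

variable {C : Type*} [Category C] [MonoidalCategory C] [BraidedCategory C]

instance isMonoidal_inverseImage_isomorphisms_tensorLeft (A : C) :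
    ((MorphismProperty.isomorphisms C).inverseImage (tensorLeft A)).IsMonoidal := by
  have whiskerRight_mem {X₁ X₂ : C} (f : X₁ ⟶ X₂) (hf : IsIso (A ◁ f)) (Y : C) :
      IsIso (A ◁ f ▷ Y) := by
    rw [show A ◁ f ▷ Y = (α_ A X₁ Y).inv ≫ (A ◁ f) ▷ Y ≫ (α_ A X₂ Y).hom by simp]
    infer_instance
  exact
  { whiskerRight := whiskerRight_mem
    whiskerLeft X Y₁ Y₂ g hg := by
      have := whiskerRight_mem g hg X
      change IsIso (A ◁ X ◁ g)
      rw [show X ◁ g = (β_ X Y₁).hom ≫ g ▷ X ≫ (β_ X Y₂).inv by simp,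
        MonoidalCategory.whiskerLeft_comp, MonoidalCategory.whiskerLeft_comp]
      infer_instance }

lemma tensorLeft_essImage_tensor_mem {A x : C} (c : C) (hx : (tensorLeft A).essImage x) :
    (tensorLeft A).essImage (c ⊗ x) := by
  obtain ⟨y, ⟨i⟩⟩ := hx
  exact ⟨c ⊗ y, ⟨(α_ A c y).symm ≪≫ whiskerRightIso (β_ A c) y ≪≫ α_ c A y ≪≫ whiskerLeftIso c i⟩⟩

end CategoryTheory.MonoidalCategory

namespace CategoryTheory.Adjunction

open MorphismProperty

variable {C D : Type*} [Category C] [MonoidalCategory C] [Category D] {F : C ⥤ D} {G : D ⥤ C}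

lemma inverseImage_isomorphisms_eq_of_iso_tensorLeft [G.ReflectsIsomorphisms] {A : C}
    (e : F ⋙ G ≅ tensorLeft A) :
    (isomorphisms D).inverseImage F = (isomorphisms C).inverseImage (tensorLeft A) := by
  ext X Y u
  exact (isIso_iff_of_reflects_iso (F.map u) G).symm.trans (NatIso.isIso_map_iff e u)

variable (adj : F ⊣ G) [G.Full] [G.Faithful] [((isomorphisms D).inverseImage F).IsMonoidal]

instance isIso_map_unit_app_tensorHom_unit_app (X Y : C) :
    IsIso (F.map (adj.unit.app X ⊗ₘ adj.unit.app Y)) :=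
  tensorHom_mem ((isomorphisms D).inverseImage F) _ _
    (inferInstanceAs (IsIso (F.map _))) (inferInstanceAs (IsIso (F.map _)))

noncomputable def tensorComparison (X Y : C) :
    (F ⋙ G).obj X ⊗ (F ⋙ G).obj Y ⟶ (F ⋙ G).obj (X ⊗ Y) :=
  adj.extendAlong (adj.unit.app X ⊗ₘ adj.unit.app Y) (adj.unit.app (X ⊗ Y))

@[simp]
lemma unit_app_tensorHom_unit_app_comp_tensorComparison (X Y : C) :
    (adj.unit.app X ⊗ₘ adj.unit.app Y) ≫ adj.tensorComparison X Y = adj.unit.app (X ⊗ Y) :=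
  adj.comp_extendAlong _ _

@[simp]
lemma unit_app_tensorHom_unit_app_comp_tensorComparison_assoc (X Y : C) {W : C}
    (h : (F ⋙ G).obj (X ⊗ Y) ⟶ W) :
    (adj.unit.app X ⊗ₘ adj.unit.app Y) ≫ adj.tensorComparison X Y ≫ h =
      adj.unit.app (X ⊗ Y) ≫ h := by
  rw [← Category.assoc, unit_app_tensorHom_unit_app_comp_tensorComparison]

lemma tensorComparison_natural {X Y X' Y' : C} (f : X ⟶ X') (g : Y ⟶ Y') :
    ((F ⋙ G).map f ⊗ₘ (F ⋙ G).map g) ≫ adj.tensorComparison X' Y' =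
      adj.tensorComparison X Y ≫ (F ⋙ G).map (f ⊗ₘ g) := by
  apply adj.hom_ext_of_isIso_map (adj.unit.app X ⊗ₘ adj.unit.app Y)
  simp [← tensorHom_comp_tensorHom]

lemma tensorComparison_associativity (X Y Z : C) :
    (adj.tensorComparison X Y ▷ (F ⋙ G).obj Z) ≫ adj.tensorComparison (X ⊗ Y) Z ≫
        (F ⋙ G).map (α_ X Y Z).hom =
      (α_ ((F ⋙ G).obj X) ((F ⋙ G).obj Y) ((F ⋙ G).obj Z)).hom ≫
        ((F ⋙ G).obj X ◁ adj.tensorComparison Y Z) ≫ adj.tensorComparison X (Y ⊗ Z) := by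
  have : IsIso (F.map ((adj.unit.app X ⊗ₘ adj.unit.app Y) ⊗ₘ adj.unit.app Z)) :=
    tensorHom_mem ((isomorphisms D).inverseImage F) _ _
      (inferInstanceAs (IsIso (F.map _))) (inferInstanceAs (IsIso (F.map _)))
  apply adj.hom_ext_of_isIso_map ((adj.unit.app X ⊗ₘ adj.unit.app Y) ⊗ₘ adj.unit.app Z)
  rw [← tensorHom_id, tensorHom_comp_tensorHom_assoc, Category.comp_id,
    unit_app_tensorHom_unit_app_comp_tensorComparison, associator_naturality_assoc,
    ← id_tensorHom, tensorHom_comp_tensorHom_assoc, Category.comp_id,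
    unit_app_tensorHom_unit_app_comp_tensorComparison]
  simp

lemma tensorComparison_left_unitality (X : C) :
    (λ_ ((F ⋙ G).obj X)).hom =
      (adj.unit.app (𝟙_ C) ▷ (F ⋙ G).obj X) ≫ adj.tensorComparison (𝟙_ C) X ≫
        (F ⋙ G).map (λ_ X).hom := by
  have : IsIso (F.map (𝟙_ C ◁ adj.unit.app X)) :=
    whiskerLeft_mem ((isomorphisms D).inverseImage F) _ _ (inferInstanceAs (IsIso (F.map _)))
  apply adj.hom_ext_of_isIso_map (𝟙_ C ◁ adj.unit.app X)
  rw [leftUnitor_naturality, whisker_exchange_assoc, ← tensorHom_def_assoc]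
  simp

lemma tensorComparison_right_unitality (X : C) :
    (ρ_ ((F ⋙ G).obj X)).hom =
      ((F ⋙ G).obj X ◁ adj.unit.app (𝟙_ C)) ≫ adj.tensorComparison X (𝟙_ C) ≫
        (F ⋙ G).map (ρ_ X).hom := by
  have : IsIso (F.map (adj.unit.app X ▷ 𝟙_ C)) :=
    whiskerRight_mem ((isomorphisms D).inverseImage F) _ (inferInstanceAs (IsIso (F.map _))) _
  apply adj.hom_ext_of_isIso_map (adj.unit.app X ▷ 𝟙_ C)
  rw [rightUnitor_naturality, ← whisker_exchange_assoc, ← tensorHom_def'_assoc]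
  simp

lemma tensorComparison_braided [BraidedCategory C] (X Y : C) :
    (β_ ((F ⋙ G).obj X) ((F ⋙ G).obj Y)).hom ≫ adj.tensorComparison Y X =
      adj.tensorComparison X Y ≫ (F ⋙ G).map (β_ X Y).hom := by
  apply adj.hom_ext_of_isIso_map (adj.unit.app X ⊗ₘ adj.unit.app Y)
  simp [BraidedCategory.braiding_naturality_assoc]

variable [SymmetricCategory C] in
noncomputable def laxSymmetricMonoidalStructure : LaxSymmetricMonoidalStructure (F ⋙ G) where
  ε := adj.unit.app (𝟙_ C)
  μ := adj.tensorComparison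
  μ_natural := adj.tensorComparison_natural
  associativity := adj.tensorComparison_associativity
  left_unitality := adj.tensorComparison_left_unitality
  right_unitality := adj.tensorComparison_right_unitality
  braided := adj.tensorComparison_braided

end CategoryTheory.Adjunction

namespace LaxSymmetricMonoidalStructure

variable {C : Type*} [Category C] [MonoidalCategory C] [SymmetricCategory C] {L : C ⥤ C}
  (s : LaxSymmetricMonoidalStructure L)

abbrev toLaxBraided : L.LaxBraided where
  toLaxMonoidal := .ofTensorHom s.ε s.μ s.μ_natural
    (fun X Y Z => by simpa using s.associativity X Y Z)
    (fun X => by simpa using s.left_unitality X)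
    (fun X => by simpa using s.right_unitality X)
  braided X Y := (s.braided X Y).symm

noncomputable def commMonObjUnit : CommMon C :=
  letI := s.toLaxBraided
  L.mapCommMon.obj (CommMon.trivial C)

end LaxSymmetricMonoidalStructure

namespace CategoryTheory.Adjunction

variable {C D : Type*} [Category C] [MonoidalCategory C] [SymmetricCategory C] [Category D]
  {F : C ⥤ D} {G : D ⥤ C} (adj : F ⊣ G) (s : LaxSymmetricMonoidalStructure (F ⋙ G))

noncomputable def unitObjTensorComparison (X : C) : (F ⋙ G).obj (𝟙_ C) ⊗ X ⟶ (F ⋙ G).obj X :=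
  ((F ⋙ G).obj (𝟙_ C) ◁ adj.unit.app X) ≫ s.μ (𝟙_ C) X ≫ (F ⋙ G).map (λ_ X).hom

lemma unitObjTensorComparison_natural {X Y : C} (g : X ⟶ Y) :
    ((F ⋙ G).obj (𝟙_ C) ◁ g) ≫ adj.unitObjTensorComparison s Y =
      adj.unitObjTensorComparison s X ≫ (F ⋙ G).map g := by
  have hnat : ((F ⋙ G).obj (𝟙_ C) ◁ (F ⋙ G).map g) ≫ s.μ (𝟙_ C) Y =
      s.μ (𝟙_ C) X ≫ (F ⋙ G).map (𝟙_ C ◁ g) := by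
    simpa using s.μ_natural (𝟙 (𝟙_ C)) g
  rw [unitObjTensorComparison, unitObjTensorComparison, ← whiskerLeft_comp_assoc,
    show g ≫ adj.unit.app Y = adj.unit.app X ≫ (F ⋙ G).map g from adj.unit.naturality g,
    whiskerLeft_comp_assoc]
  slice_lhs 2 3 => rw [hnat]
  rw [Category.assoc, ← Functor.map_comp, leftUnitor_naturality, Functor.map_comp]
  simp only [Category.assoc]

variable (hμ : ∀ X Y : C,
  (adj.unit.app X ⊗ₘ adj.unit.app Y) ≫ s.μ X Y = adj.unit.app (X ⊗ Y))
include hμ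

lemma unit_comp_unitObjTensorComparison (X : C) :
    ((λ_ X).inv ≫ adj.unit.app (𝟙_ C) ▷ X) ≫ adj.unitObjTensorComparison s X = adj.unit.app X := by
  rw [unitObjTensorComparison, Category.assoc, ← tensorHom_def_assoc, reassoc_of% (hμ (𝟙_ C) X)]
  simp

variable [G.Full]

lemma unitObjTensorComparison_comp_map (X : C) :
    adj.unitObjTensorComparison s X ≫ (F ⋙ G).map ((λ_ X).inv ≫ adj.unit.app (𝟙_ C) ▷ X) =
      adj.unit.app ((F ⋙ G).obj (𝟙_ C) ⊗ X) := by
  have hnat : ((F ⋙ G).map (adj.unit.app (𝟙_ C)) ▷ (F ⋙ G).obj X) ≫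
      s.μ ((F ⋙ G).obj (𝟙_ C)) X = s.μ (𝟙_ C) X ≫ (F ⋙ G).map (adj.unit.app (𝟙_ C) ▷ X) := by
    simpa using s.μ_natural (adj.unit.app (𝟙_ C)) (𝟙 X)
  rw [unitObjTensorComparison, Category.assoc, Category.assoc, ← Functor.map_comp,
    Iso.hom_inv_id_assoc, ← hnat, ← tensorHom_def'_assoc, map_unit_app_eq_unit_app_obj, hμ]

variable [G.Faithful]

lemma isIso_unitObjTensorComparison
    (hideal : ∀ c x : C, (F ⋙ G).essImage x → (F ⋙ G).essImage (c ⊗ x)) (X : C) :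
    IsIso (adj.unitObjTensorComparison s X) := by
  have : IsIso (adj.unit.app ((F ⋙ G).obj (𝟙_ C) ⊗ X)) := by
    obtain ⟨Y, ⟨i⟩⟩ := (hideal X _ ((F ⋙ G).obj_mem_essImage (𝟙_ C))).ofIso (β_ _ _)
    exact adj.isIso_unit_app_of_iso i.symm
  exact adj.isIso_of_comp_eq_unit_app _ _ (adj.unit_comp_unitObjTensorComparison s hμ X)
    (adj.unitObjTensorComparison_comp_map s hμ X)

noncomputable def isoTensorLeftOfIdeal
    (hideal : ∀ c x : C, (F ⋙ G).essImage x → (F ⋙ G).essImage (c ⊗ x)) :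
    F ⋙ G ≅ tensorLeft ((F ⋙ G).obj (𝟙_ C)) :=
  haveI := adj.isIso_unitObjTensorComparison s hμ hideal
  (NatIso.ofComponents (fun X => asIso (adj.unitObjTensorComparison s X))
    (adj.unitObjTensorComparison_natural s)).symm

end CategoryTheory.Adjunction

/-- Let `C` be a symmetric monoidal category and let `L = F ⋙ G` be a localization
(where `F ⊣ G` with `G` fully faithful).  Then `L` is smashing (i.e. `L ≅ A ⊗ -` for
some commutative algebra object `A` of `C`) if and only if `L` carries a symmetric
monoidal structure making the unit `id ⟶ L` monoidal, and the essential image of `L`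
is an ideal of `C`. -/
theorem smashing_iff_monoidal_and_ideal {C : Type*} [Category C] [MonoidalCategory C]
    [SymmetricCategory C] {D : Type*} [Category D] (F : C ⥤ D) (G : D ⥤ C)
    (adj : F ⊣ G) [G.Full] [G.Faithful] :
    (∃ A : CommMon C, Nonempty (F ⋙ G ≅ tensorLeft A.X)) ↔
      ((∃ s : LaxSymmetricMonoidalStructure (F ⋙ G),
          s.ε = adj.unit.app (𝟙_ C) ∧
          ∀ X Y : C, (adj.unit.app X ⊗ₘ adj.unit.app Y) ≫ s.μ X Y = adj.unit.app (X ⊗ Y)) ∧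
        ∀ c x : C, (F ⋙ G).essImage x → (F ⋙ G).essImage (c ⊗ x)) := by
  constructor
  · rintro ⟨A, ⟨e⟩⟩
    have : ((MorphismProperty.isomorphisms D).inverseImage F).IsMonoidal := by
      rw [Adjunction.inverseImage_isomorphisms_eq_of_iso_tensorLeft e]
      infer_instance
    refine ⟨⟨adj.laxSymmetricMonoidalStructure, rfl,
      adj.unit_app_tensorHom_unit_app_comp_tensorComparison⟩, ?_⟩
    rw [Functor.essImage_eq_of_natIso e]
    exact fun c _ => tensorLeft_essImage_tensor_mem c
  · rintro ⟨⟨s, -, hμ⟩, hideal⟩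
    exact ⟨s.commMonObjUnit, ⟨adj.isoTensorLeftOfIdeal s hμ hideal⟩⟩
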